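/- arXiv:1708.01699 — 2 statements merged into one kernel-verified Lean document; each statement's English description precedes it below -/
import Mathlib

section
/- Let p(z) = Σ_{j=0}^{d} p_j z^j ∈ ℂ[z] be a stable polynomial with p(0) = 1 (so p_0 = 1). Then for all z ∈ ℂ, |p(z)| ≤ exp(Re(p_1 z) + (1/2)(|p_1|² − 2 Re(p_2))|z|²). -/
/-!
Since `p 0 = 1`, `p = ∏ (1 - a X)` over the inverses `a` of its roots, and stability puts every
`a` in the closed upper half-plane. Applying `1 + x ≤ exp x` to `‖1 - w‖² = 1 - 2 Re w + ‖w‖²`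
bounds each factor by `exp (-Re w + ‖w‖² / 2)`, so `‖p z‖ ≤ exp (Re (p₁ z) + ½ ∑ ‖a‖² ‖z‖²)`
because `p₁ = -∑ a`. As `‖a‖² = Re (a²) + 2 (Im a)²` and `2 p₂ = (∑ a)² - ∑ a²`, the remaining
inequality `∑ ‖a‖² ≤ ‖p₁‖² - 2 Re p₂` is `∑ (Im a)² ≤ (∑ Im a)²`, true as all `Im a ≥ 0`.
-/

open Polynomial Complex

theorem Multiset.sum_map_sq_le_sq_sum_of_nonneg {ι R : Type*} [CommSemiring R] [PartialOrder R]
    [IsOrderedRing R] (s : Multiset ι) (f : ι → R) (hf : ∀ i ∈ s, 0 ≤ f i) :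
    (s.map fun i => f i ^ 2).sum ≤ (s.map f).sum ^ 2 := by
  induction s using Multiset.induction with
  | empty => simp
  | cons a s ih =>
    have ha : 0 ≤ f a := hf a (Multiset.mem_cons_self a s)
    have hs : 0 ≤ (s.map f).sum := Multiset.sum_nonneg fun x hx => by
      obtain ⟨i, hi, rfl⟩ := Multiset.mem_map.mp hx
      exact hf i (Multiset.mem_cons_of_mem hi)
    have hrest := ih fun i hi => hf i (Multiset.mem_cons_of_mem hi)
    simp only [Multiset.map_cons, Multiset.sum_cons]
    calc f a ^ 2 + (s.map fun i => f i ^ 2).sum ≤ f a ^ 2 + (s.map f).sum ^ 2 := by gcongr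
      _ ≤ (f a + (s.map f).sum) ^ 2 := by
        rw [add_sq]
        exact add_le_add_left (le_add_of_nonneg_right (mul_nonneg (mul_nonneg zero_le_two ha) hs)) _

protected theorem Multiset.norm_prod {α : Type*} [SeminormedCommRing α] [NormMulClass α]
    [NormOneClass α] (s : Multiset α) : ‖s.prod‖ = (s.map norm).prod :=
  map_multiset_prod (normHom : α →*₀ ℝ) s

namespace Polynomial

section CommRing

variable {R : Type*} [CommRing R]

theorem eval_zero_prod_one_sub_C_mul_X (A : Multiset R) :
    (A.map fun a => 1 - C a * X).prod.eval 0 = 1 := by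
  simp [eval_multiset_prod]

theorem coeff_one_prod_one_sub_C_mul_X (A : Multiset R) :
    (A.map fun a => 1 - C a * X).prod.coeff 1 = -A.sum := by
  induction A using Multiset.induction with
  | empty => simp [coeff_one]
  | cons a A ih =>
    rw [Multiset.map_cons, Multiset.prod_cons, sub_mul, one_mul, mul_assoc, coeff_sub,
      coeff_C_mul, coeff_X_mul, coeff_zero_eq_eval_zero, eval_zero_prod_one_sub_C_mul_X, ih,
      Multiset.sum_cons]
    ring

theorem two_mul_coeff_two_prod_one_sub_C_mul_X (A : Multiset R) :
    2 * (A.map fun a => 1 - C a * X).prod.coeff 2 = A.sum ^ 2 - (A.map (· ^ 2)).sum := by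
  induction A using Multiset.induction with
  | empty => simp [coeff_one]
  | cons a A ih =>
    rw [Multiset.map_cons, Multiset.prod_cons, sub_mul, one_mul, mul_assoc, coeff_sub,
      coeff_C_mul, coeff_X_mul, coeff_one_prod_one_sub_C_mul_X, Multiset.sum_cons,
      Multiset.map_cons, Multiset.sum_cons]
    linear_combination ih

end CommRing

theorem Splits.eq_prod_one_sub_C_inv_mul_X {K : Type*} [Field K] {p : K[X]} (hp : p.Splits)
    (h0 : p.eval 0 = 1) : p = (p.roots.map fun r => 1 - C r⁻¹ * X).prod := by
  have hfactor : ∀ r ∈ p.roots, X - C r = C (-r) * (1 - C r⁻¹ * X) := by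
    intro r hr
    have hr0 : r ≠ 0 := by
      rintro rfl
      exact one_ne_zero (h0.symm.trans (isRoot_of_mem_roots hr).eq_zero)
    rw [mul_sub, ← mul_assoc, ← C_mul, neg_mul, mul_inv_cancel₀ hr0]
    simp only [map_neg, map_one]
    ring
  set q := (p.roots.map fun r => 1 - C r⁻¹ * X).prod
  obtain ⟨c, hc⟩ : ∃ c, p = C c * q := by
    refine ⟨p.leadingCoeff * (p.roots.map fun r => -r).prod, ?_⟩
    conv_lhs => rw [hp.eq_prod_roots, Multiset.map_congr rfl hfactor, Multiset.prod_map_mul]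
    rw [map_mul, map_multiset_prod, Multiset.map_map, mul_assoc]
    rfl
  have hq0 : q.eval 0 = 1 := by simp [q, eval_multiset_prod]
  rw [hc, eval_mul, eval_C, hq0, mul_one] at h0
  rw [hc, h0, C_1, one_mul]

end Polynomial

namespace Complex

theorem re_multiset_sum (s : Multiset ℂ) : s.sum.re = (s.map re).sum :=
  map_multiset_sum reAddGroupHom s

theorem im_multiset_sum (s : Multiset ℂ) : s.sum.im = (s.map im).sum :=
  map_multiset_sum imAddGroupHom s

theorem norm_one_sub_le_exp (w : ℂ) : ‖1 - w‖ ≤ Real.exp (-w.re + ‖w‖ ^ 2 / 2) := by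
  have hsq : ‖1 - w‖ ^ 2 = 1 + (-2 * w.re + ‖w‖ ^ 2) := by
    simp only [Complex.sq_norm, normSq_apply, sub_re, sub_im, one_re, one_im]
    ring
  refine (pow_le_pow_iff_left₀ (norm_nonneg _) (Real.exp_nonneg _) two_ne_zero).mp ?_
  calc ‖1 - w‖ ^ 2 = 1 + (-2 * w.re + ‖w‖ ^ 2) := hsq
    _ ≤ Real.exp (-2 * w.re + ‖w‖ ^ 2) := by linarith [Real.add_one_le_exp (-2 * w.re + ‖w‖ ^ 2)]
    _ = Real.exp (-w.re + ‖w‖ ^ 2 / 2) ^ 2 := by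
      rw [← Real.exp_nat_mul]
      congr 1
      push_cast
      ring

theorem norm_sq_eq_re_sq_add_two_mul_im_sq (a : ℂ) : ‖a‖ ^ 2 = (a ^ 2).re + 2 * a.im ^ 2 := by
  rw [Complex.sq_norm, normSq_apply, sq, mul_re]
  ring

theorem sum_map_norm_sq_le_of_im_nonneg (A : Multiset ℂ) (hA : ∀ a ∈ A, 0 ≤ a.im) :
    (A.map fun a => ‖a‖ ^ 2).sum ≤ ‖A.sum‖ ^ 2 - (A.sum ^ 2 - (A.map (· ^ 2)).sum).re := by
  have hsq : (A.map fun a => a.im ^ 2).sum ≤ A.sum.im ^ 2 := by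
    rw [im_multiset_sum]
    exact Multiset.sum_map_sq_le_sq_sum_of_nonneg A im hA
  simp only [norm_sq_eq_re_sq_add_two_mul_im_sq, Multiset.sum_map_add, sub_re,
    re_multiset_sum, Multiset.map_map, Function.comp_def, Multiset.sum_map_mul_left]
  linarith

theorem norm_eval_prod_one_sub_C_mul_X_le (A : Multiset ℂ) (z : ℂ) :
    ‖(A.map fun a => 1 - C a * X).prod.eval z‖ ≤
      Real.exp (-(A.sum * z).re + (A.map fun a => ‖a‖ ^ 2).sum / 2 * ‖z‖ ^ 2) :=
  calc ‖(A.map fun a => 1 - C a * X).prod.eval z‖ = (A.map fun a => ‖1 - a * z‖).prod := by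
        simp [eval_multiset_prod, Multiset.norm_prod]
    _ ≤ (A.map fun a => Real.exp (-(a * z).re + ‖a * z‖ ^ 2 / 2)).prod :=
        Multiset.prod_map_le_prod_map₀ _ _ (fun _ _ => norm_nonneg _)
          fun a _ => norm_one_sub_le_exp (a * z)
    _ = Real.exp (A.map fun a => -(a * z).re + ‖a * z‖ ^ 2 / 2).sum := by
        rw [Real.exp_multiset_sum, Multiset.map_map]
        rfl
    _ = _ := by
        have hre : (A.sum * z).re = (A.map fun a => (a * z).re).sum := by
          simp [re_multiset_sum, im_multiset_sum, ← Multiset.sum_map_mul_right]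
        simp only [Multiset.sum_map_add, norm_mul, mul_pow, Multiset.sum_map_div,
          Multiset.sum_map_mul_right, Multiset.sum_map_neg, hre]
        congr 1
        ring

end Complex

theorem szasz_improved (p : Polynomial ℂ)
    (hstable : ∀ z : ℂ, 0 < z.im → p.eval z ≠ 0)
    (hp0 : p.eval 0 = 1) :
    ∀ z : ℂ,
      ‖p.eval z‖ ≤
        Real.exp ((p.coeff 1 * z).re +
          (1 / 2) * (‖p.coeff 1‖ ^ 2 - 2 * (p.coeff 2).re) *
            ‖z‖ ^ 2) := by
  intro z
  set A := p.roots.map (·⁻¹)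
  have hp : p = (A.map fun a => 1 - C a * X).prod := by
    rw [Multiset.map_map]
    exact (IsAlgClosed.splits p).eq_prod_one_sub_C_inv_mul_X hp0
  have hA : ∀ a ∈ A, 0 ≤ a.im := by
    simp only [A, Multiset.forall_mem_map_iff, inv_im]
    intro r hr
    have hr : r.im ≤ 0 := not_lt.mp fun h => hstable r h (isRoot_of_mem_roots hr)
    exact div_nonneg (neg_nonneg.mpr hr) (normSq_nonneg r)
  have h2 : 2 * (p.coeff 2).re = (A.sum ^ 2 - (A.map (· ^ 2)).sum).re := by
    rw [← two_mul_coeff_two_prod_one_sub_C_mul_X, ← hp]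
    simp
  rw [h2, hp, coeff_one_prod_one_sub_C_mul_X, norm_neg, neg_mul, neg_re]
  refine (norm_eval_prod_one_sub_C_mul_X_le A z).trans (Real.exp_le_exp.mpr ?_)
  linarith [mul_le_mul_of_nonneg_right (sum_map_norm_sq_le_of_im_nonneg A hA) (sq_nonneg ‖z‖)]
end

section
/- Let p ∈ ℂ[z₁, …, z_n] be a stable polynomial. Then for all x ∈ ℝⁿ and all y, ỹ ∈ ℝⁿ with 0 ≤ y_j ≤ ỹ_j for every j, |p(x + iy)| ≤ |p(x + iỹ)|, where x + iy denotes the point (x₁ + iy₁, …, x_n + iy_n) ∈ ℂⁿ. -/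
open MvPolynomial

/-! For univariate `q`, `|q z| = |c| ∏ |z - a|`, with `c` the leading coefficient and `a` running
over the roots. If `q` has no zeros in the open upper half-plane, every root has `Im a ≤ 0`, so
each factor grows as `z` moves upward inside the closed upper half-plane. For stable `p` and `d`
with positive entries, `s ↦ p (x + i y + s d)` is such a polynomial; with `d = ỹ - y + ε` it
compares `p (x + i y)` with `p (x + i (ỹ + ε))`, and `ε → 0` gives the claim. The `ε` is needed
because `ỹ - y` may vanish in coordinates where `y` does. -/

theorem Complex.norm_sub_le_norm_add_mul_I_sub {a w : ℂ} (h : a.im ≤ w.im) {t : ℝ} (ht : 0 ≤ t) :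
    ‖w - a‖ ≤ ‖w + t * I - a‖ := by
  rw [norm_def, norm_def]
  apply Real.sqrt_le_sqrt
  simp only [normSq_apply, sub_re, sub_im, add_re, add_im, mul_re, mul_im, ofReal_re, ofReal_im,
    I_re, I_im]
  nlinarith

theorem norm_multiset_prod {α : Type*} [NormedField α] (s : Multiset α) :
    ‖s.prod‖ = (s.map (‖·‖)).prod :=
  (Multiset.prod_hom s (normHom : α →*₀ ℝ)).symm

namespace Polynomial

def IsStable (q : ℂ[X]) : Prop := ∀ z : ℂ, 0 < z.im → q.eval z ≠ 0

theorem norm_eval_eq_norm_leadingCoeff_mul_prod_roots (q : ℂ[X]) (z : ℂ) :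
    ‖q.eval z‖ = ‖q.leadingCoeff‖ * (q.roots.map fun a => ‖z - a‖).prod := by
  rw [(IsAlgClosed.splits q).eval_eq_prod_roots, norm_mul,
    norm_multiset_prod, Multiset.map_map]
  rfl

theorem IsStable.im_nonpos_of_mem_roots {q : ℂ[X]} (hq : q.IsStable) {a : ℂ} (ha : a ∈ q.roots) :
    a.im ≤ 0 :=
  not_lt.1 fun h => hq a h (isRoot_of_mem_roots ha)

theorem IsStable.norm_eval_le_norm_eval_add_mul_I {q : ℂ[X]} (hq : q.IsStable) {w : ℂ}
    (hw : 0 ≤ w.im) {t : ℝ} (ht : 0 ≤ t) : ‖q.eval w‖ ≤ ‖q.eval (w + t * Complex.I)‖ := by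
  rw [norm_eval_eq_norm_leadingCoeff_mul_prod_roots, norm_eval_eq_norm_leadingCoeff_mul_prod_roots]
  gcongr
  exact Multiset.prod_map_le_prod_map₀ _ _ (fun _ _ => norm_nonneg _) fun a ha =>
    Complex.norm_sub_le_norm_add_mul_I_sub ((hq.im_nonpos_of_mem_roots ha).trans hw) ht

end Polynomial

namespace MvPolynomial

variable {σ : Type*}

def IsStable (p : MvPolynomial σ ℂ) : Prop := ∀ z : σ → ℂ, (∀ j, 0 < (z j).im) → eval z p ≠ 0

noncomputable def restrictLine {R : Type*} [CommSemiring R] (p : MvPolynomial σ R) (a d : σ → R) :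
    Polynomial R :=
  aeval (fun j => Polynomial.C (a j) + Polynomial.C (d j) * Polynomial.X) p

theorem eval_restrictLine {R : Type*} [CommSemiring R] (p : MvPolynomial σ R) (a d : σ → R)
    (s : R) :
    (p.restrictLine a d).eval s = eval (fun j => a j + d j * s) p := by
  rw [restrictLine, ← Polynomial.coe_aeval_eq_eval, ← AlgHom.comp_apply, comp_aeval,
    ← coe_aeval_eq_eval]
  simp

theorem IsStable.restrictLine {p : MvPolynomial σ ℂ} (hp : p.IsStable) {a : σ → ℂ}
    (ha : ∀ j, 0 ≤ (a j).im) {d : σ → ℝ} (hd : ∀ j, 0 < d j) :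
    (p.restrictLine a fun j => d j).IsStable := fun s hs => by
  rw [eval_restrictLine]
  refine hp _ fun j => ?_
  simp only [Complex.add_im, Complex.mul_im, Complex.ofReal_re, Complex.ofReal_im, zero_mul,
    add_zero]
  exact add_pos_of_nonneg_of_pos (ha j) (mul_pos (hd j) hs)

theorem IsStable.norm_eval_le_norm_eval_add_I_mul {p : MvPolynomial σ ℂ} (hp : p.IsStable)
    {a : σ → ℂ} (ha : ∀ j, 0 ≤ (a j).im) {d : σ → ℝ} (hd : ∀ j, 0 < d j) :
    ‖eval a p‖ ≤ ‖eval (fun j => a j + Complex.I * d j) p‖ := by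
  have := (hp.restrictLine ha hd).norm_eval_le_norm_eval_add_mul_I (w := 0) le_rfl zero_le_one
  simpa [eval_restrictLine, mul_comm] using this

end MvPolynomial

theorem abs_mono_in_imaginary_part (n : ℕ) (p : MvPolynomial (Fin n) ℂ)
    (hstable : ∀ z : Fin n → ℂ, (∀ j, 0 < (z j).im) → eval z p ≠ 0) :
    ∀ (x y ytilde : Fin n → ℝ), (∀ j, 0 ≤ y j) → (∀ j, y j ≤ ytilde j) →
      ‖eval (fun j => (x j : ℂ) + Complex.I * (y j : ℂ)) p‖ ≤
        ‖eval (fun j => (x j : ℂ) + Complex.I * (ytilde j : ℂ)) p‖ := by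
  intro x y ytilde hy hyt
  set f : ℝ → ℝ := fun ε => ‖eval (fun j => (x j : ℂ) + Complex.I * ((ytilde j + ε : ℝ) : ℂ)) p‖
  have hf : Continuous f := ((continuous_eval p).comp (by fun_prop)).norm
  have hpos : ∀ ε > 0, ‖eval (fun j => (x j : ℂ) + Complex.I * (y j : ℂ)) p‖ ≤ f ε := by
    intro ε hε
    refine (IsStable.norm_eval_le_norm_eval_add_I_mul hstable
      (a := fun j => (x j : ℂ) + Complex.I * (y j : ℂ)) (by simpa using hy)
      (d := fun j => ytilde j - y j + ε) (fun j => by linarith [hyt j])).trans_eq ?_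
    exact congrArg (fun z => ‖eval z p‖) (funext fun j => by push_cast; ring)
  have hlim := (hf.tendsto 0).mono_left (nhdsWithin_le_nhds (s := Set.Ioi 0))
  simpa [f] using ge_of_tendsto hlim (eventually_nhdsWithin_of_forall hpos)
end
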